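/- For every real x > 0, every h ∈ ℂ with Re(h) > 1, and every t ∈ ℂ, the generating function of the (h,q)-Bernoulli polynomials satisfies the difference equation F_q(t, x | h) = exp([x]_q·t) · F_q(q^x·t | h); explicitly, −t · Σ_{n=0}^{∞} q^{hn+x}·exp([x+n]_q·t) + (h−1)(1−q) · Σ_{n=0}^{∞} q^{(h−1)n}·exp([x+n]_q·t) = exp([x]_q·t) · ( −q^x·t · Σ_{n=0}^{∞} q^{hn}·exp([n]_q·q^x·t) + (h−1)(1−q) · Σ_{n=0}^{∞} q^{(h−1)n}·exp([n]_q·q^x·t) ), all series converging absolutely. -/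

import Mathlib

/-!
Both sides are built from the same two series. The additivity rule
`[x + n]_q = [x]_q + q^x [n]_q` gives `exp ([x + n]_q t) = exp ([x]_q t) · exp ([n]_q q^x t)`
termwise, and `q^{hn + x} = q^x q^{hn}`, so the common factors `exp ([x]_q t)` and `q^x` can be
pulled out of the sums. Absolute convergence holds because `|[y]_q| ≤ 1/(1 - q)` for `y ≥ 0`,
so the exponentials are bounded, while `|q^{zn}| = |q^z|^n` decays geometrically when `Re z > 0`.
-/

open Complex Finset Filter

/-- Complex power `q^z := exp(z·log q)` for a real base `q`. -/
noncomputable def qcpow (q : ℝ) (z : ℂ) : ℂ := Complex.exp (z * (Real.log q : ℂ))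

/-- The complex `q`-number `[z]_q = (1 - q^z)/(1 - q)`. -/
noncomputable def qnum (q : ℝ) (z : ℂ) : ℂ := (1 - qcpow q z) / (1 - (q : ℂ))

/-- The real `q`-number `[y]_q = (1 - q^y)/(1 - q)` for real `y`. -/
noncomputable def qnumR (q : ℝ) (y : ℝ) : ℝ := (1 - Real.exp (y * Real.log q)) / (1 - q)

/-- The `(h,q)`-Bernoulli polynomial
`β_{n,q}^h(x) = (1-q)^{-n} ∑_{l=0}^{n} C(n,l) (-1)^l q^{lx} (l+h-1)/[l+h-1]_q`. -/
noncomputable def qbeta (q : ℝ) (h : ℂ) (n : ℕ) (x : ℝ) : ℂ :=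
  (1 - (q : ℂ))⁻¹ ^ n * ∑ l ∈ Finset.range (n + 1),
    (n.choose l : ℂ) * (-1) ^ l * qcpow q ((l : ℂ) * (x : ℂ)) *
      (((l : ℂ) + h - 1) / qnum q ((l : ℂ) + h - 1))

lemma qcpow_add (q : ℝ) (z w : ℂ) : qcpow q (z + w) = qcpow q z * qcpow q w := by
  rw [qcpow, qcpow, qcpow, add_mul, Complex.exp_add]

lemma qcpow_mul_natCast (q : ℝ) (z : ℂ) (n : ℕ) : qcpow q (z * n) = qcpow q z ^ n := by
  rw [qcpow, qcpow, ← Complex.exp_nat_mul]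
  ring_nf

lemma qcpow_ofReal (q x : ℝ) : qcpow q x = (Real.exp (x * Real.log q) : ℂ) := by
  rw [qcpow, Complex.ofReal_exp]
  push_cast
  rfl

lemma qnumR_add {q : ℝ} (hq : q ≠ 1) (x y : ℝ) :
    qnumR q (x + y) = qnumR q x + Real.exp (x * Real.log q) * qnumR q y := by
  have : 1 - q ≠ 0 := sub_ne_zero.2 hq.symm
  simp only [qnumR]
  field_simp
  rw [add_mul, Real.exp_add]
  ring

lemma exp_qnumR_add_mul {q : ℝ} (hq : q ≠ 1) (x y : ℝ) (t : ℂ) :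
    Complex.exp (qnumR q (x + y) * t) =
      Complex.exp (qnumR q x * t) * Complex.exp (qnumR q y * (qcpow q x * t)) := by
  rw [← Complex.exp_add, qnumR_add hq, qcpow_ofReal]
  push_cast
  ring_nf

lemma norm_qcpow_lt_one {q : ℝ} (hq0 : 0 < q) (hq1 : q < 1) {z : ℂ} (hz : 0 < z.re) :
    ‖qcpow q z‖ < 1 := by
  rw [qcpow, Complex.norm_exp, Real.exp_lt_one_iff]
  simpa [Complex.mul_re] using mul_neg_of_pos_of_neg hz (Real.log_neg hq0 hq1)

lemma summable_qcpow_mul_of_norm_le {q : ℝ} (hq0 : 0 < q) (hq1 : q < 1) {z : ℂ} (hz : 0 < z.re)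
    {f : ℕ → ℂ} {C : ℝ} (hf : ∀ n, ‖f n‖ ≤ C) :
    Summable fun n : ℕ => qcpow q (z * n) * f n := by
  refine Summable.of_norm_bounded ((summable_geometric_of_lt_one (norm_nonneg _)
    (norm_qcpow_lt_one hq0 hq1 hz)).mul_right C) fun n => ?_
  rw [norm_mul, qcpow_mul_natCast, norm_pow]
  exact mul_le_mul_of_nonneg_left (hf n) (by positivity)

lemma abs_qnumR_le {q : ℝ} (hq0 : 0 < q) (hq1 : q < 1) {y : ℝ} (hy : 0 ≤ y) :
    |qnumR q y| ≤ (1 - q)⁻¹ := by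
  have hpow_le_one : Real.exp (y * Real.log q) ≤ 1 :=
    Real.exp_le_one_iff.2 (mul_nonpos_of_nonneg_of_nonpos hy (Real.log_neg hq0 hq1).le)
  have hinv_pos : 0 < (1 - q)⁻¹ := inv_pos.2 (sub_pos.2 hq1)
  rw [qnumR, div_eq_mul_inv, abs_mul, abs_of_nonneg (sub_nonneg.2 hpow_le_one),
    abs_of_pos hinv_pos]
  exact mul_le_of_le_one_left hinv_pos.le (by linarith [Real.exp_pos (y * Real.log q)])

lemma norm_exp_qnumR_mul_le {q : ℝ} (hq0 : 0 < q) (hq1 : q < 1) {y : ℝ} (hy : 0 ≤ y)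
    (t : ℂ) :
    ‖Complex.exp (qnumR q y * t)‖ ≤ Real.exp ((1 - q)⁻¹ * ‖t‖) := by
  refine (Complex.norm_exp_le_exp_norm _).trans (Real.exp_le_exp.2 ?_)
  rw [norm_mul, Complex.norm_real, Real.norm_eq_abs]
  gcongr
  exact abs_qnumR_le hq0 hq1 hy

/-- the difference equation `F_q(t, x | h) = e^{[x]_q t} F_q(q^x t | h)`
for the generating function of the `(h,q)`-Bernoulli polynomials,
with all series converging absolutely. -/
theorem Fq_difference_equation (q : ℝ) (hq0 : 0 < q) (hq1 : q < 1)
    (h : ℂ) (hh : 1 < h.re) (x : ℝ) (hx : 0 < x) (t : ℂ) :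
    Summable (fun n : ℕ => qcpow q (h * (n : ℂ) + (x : ℂ)) *
      Complex.exp ((qnumR q (x + n) : ℂ) * t)) ∧
    Summable (fun n : ℕ => qcpow q ((h - 1) * (n : ℂ)) *
      Complex.exp ((qnumR q (x + n) : ℂ) * t)) ∧
    Summable (fun n : ℕ => qcpow q (h * (n : ℂ)) *
      Complex.exp ((qnumR q (n : ℝ) : ℂ) * (qcpow q (x : ℂ) * t))) ∧
    Summable (fun n : ℕ => qcpow q ((h - 1) * (n : ℂ)) *
      Complex.exp ((qnumR q (n : ℝ) : ℂ) * (qcpow q (x : ℂ) * t))) ∧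
    (-t * ∑' n : ℕ, qcpow q (h * (n : ℂ) + (x : ℂ)) *
        Complex.exp ((qnumR q (x + n) : ℂ) * t)) +
      (h - 1) * (1 - (q : ℂ)) *
        (∑' n : ℕ, qcpow q ((h - 1) * (n : ℂ)) *
          Complex.exp ((qnumR q (x + n) : ℂ) * t)) =
      Complex.exp ((qnumR q x : ℂ) * t) *
        ((-(qcpow q (x : ℂ) * t) * ∑' n : ℕ, qcpow q (h * (n : ℂ)) *
            Complex.exp ((qnumR q (n : ℝ) : ℂ) * (qcpow q (x : ℂ) * t))) +
          (h - 1) * (1 - (q : ℂ)) *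
            ∑' n : ℕ, qcpow q ((h - 1) * (n : ℂ)) *
              Complex.exp ((qnumR q (n : ℝ) : ℂ) * (qcpow q (x : ℂ) * t))) := by
  have hh0 : 0 < h.re := by linarith
  have hh1 : 0 < (h - 1).re := by simpa using hh
  have hbound (n : ℕ) := norm_exp_qnumR_mul_le hq0 hq1 (by positivity : 0 ≤ x + n) t
  have hbound' (n : ℕ) := norm_exp_qnumR_mul_le hq0 hq1 n.cast_nonneg (qcpow q x * t)
  have hshift (n : ℕ) := exp_qnumR_add_mul hq1.ne x n t
  have hterm (n : ℕ) : qcpow q (h * n + x) * Complex.exp (qnumR q (x + n) * t) =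
      qcpow q x * (qcpow q (h * n) * Complex.exp (qnumR q (x + n) * t)) := by
    rw [qcpow_add]; ring
  refine ⟨?_, summable_qcpow_mul_of_norm_le hq0 hq1 hh1 hbound,
    summable_qcpow_mul_of_norm_le hq0 hq1 hh0 hbound',
    summable_qcpow_mul_of_norm_le hq0 hq1 hh1 hbound', ?_⟩
  · simpa only [hterm] using (summable_qcpow_mul_of_norm_le hq0 hq1 hh0 hbound).mul_left _
  · rw [tsum_congr hterm, tsum_mul_left]
    simp only [hshift, mul_left_comm _ (Complex.exp (qnumR q x * t)), tsum_mul_left]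
    ring
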